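/- arXiv:math/0609709 — 4 statements merged into one kernel-verified Lean document; each statement's English description precedes it below -/
import Mathlib

section
/- Suppose the a-posteriori set G_y is nonempty, the family {ℓ_k}_{k=0}^{N+1} belongs to L, and ({x̂_k}_{k=0}^{N+1}, {z_k}_{k=0}^{N+1}) is a solution of the boundary-value system: F_k' z_k − C_k' z_{k+1} = H_k' R_k (y_k − H_k x̂_k) for k = 0,…,N; F_{k+1} x̂_{k+1} − C_k x̂_k = B_k Q_k^{−1} B_k' z_{k+1} for k = 0,…,N; F_0 x̂_0 = B_{−1} Q_{−1}^{−1} B_{−1}' z_0; F_{N+1}' z_{N+1} = 0. Then the number ℓ̂ = Σ_{k=0}^{N+1} (ℓ_k, x̂_k) is a minimax a-posteriori estimation of ℓ. -/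
open Matrix

/-!  Index conventions.  The state sequence `x_0,…,x_{N+1}` is a function
`Fin (N+2) → Fin n → ℝ`.  The disturbance sequence `f_{-1},…,f_N` and the
data `B_{-1},…,B_N`, `Q_{-1},…,Q_N` are shifted by one, so `f j`, `B j`,
`Q j` (for `j : Fin (N+2)`) stand for `f_{j-1}`, `B_{j-1}`, `Q_{j-1}`. -/

/-- The constraint set `𝒩` of pairs `({x_k}_{0}^{N+1}, {f_k}_{-1}^{N})` with
`F_{k+1} x_{k+1} - C_k x_k = B_k f_k` (k = 0,…,N) and `F_0 x_0 = B_{-1} f_{-1}`. -/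
def NSet {N m n p : ℕ} (F : Fin (N + 2) → Matrix (Fin m) (Fin n) ℝ)
    (C : Fin (N + 1) → Matrix (Fin m) (Fin n) ℝ)
    (B : Fin (N + 2) → Matrix (Fin m) (Fin p) ℝ) :
    Set ((Fin (N + 2) → Fin n → ℝ) × (Fin (N + 2) → Fin p → ℝ)) :=
  {xf | (∀ k : Fin (N + 1),
      F k.succ *ᵥ xf.1 k.succ - C k *ᵥ xf.1 k.castSucc = B k.succ *ᵥ xf.2 k.succ) ∧
    F 0 *ᵥ xf.1 0 = B 0 *ᵥ xf.2 0}

/-- The functional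
`J_y({f},{x}) = Σ_{k=-1}^{N} (Q_k f_k, f_k) + Σ_{k=0}^{N} (R_k(y_k - H_k x_k), y_k - H_k x_k)`. -/
def Jfun {N n p q : ℕ} (H : Fin (N + 1) → Matrix (Fin q) (Fin n) ℝ)
    (Q : Fin (N + 2) → Matrix (Fin p) (Fin p) ℝ)
    (R : Fin (N + 1) → Matrix (Fin q) (Fin q) ℝ)
    (y : Fin (N + 1) → Fin q → ℝ)
    (f : Fin (N + 2) → Fin p → ℝ) (x : Fin (N + 2) → Fin n → ℝ) : ℝ :=
  (∑ j : Fin (N + 2), (Q j *ᵥ f j) ⬝ᵥ f j) +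
    ∑ k : Fin (N + 1),
      (R k *ᵥ (y k - H k *ᵥ x k.castSucc)) ⬝ᵥ (y k - H k *ᵥ x k.castSucc)

/-- The a-posteriori set `G_y`. -/
def GSet {N m n p q : ℕ} (F : Fin (N + 2) → Matrix (Fin m) (Fin n) ℝ)
    (C : Fin (N + 1) → Matrix (Fin m) (Fin n) ℝ)
    (H : Fin (N + 1) → Matrix (Fin q) (Fin n) ℝ)
    (B : Fin (N + 2) → Matrix (Fin m) (Fin p) ℝ)
    (Q : Fin (N + 2) → Matrix (Fin p) (Fin p) ℝ)
    (R : Fin (N + 1) → Matrix (Fin q) (Fin q) ℝ)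
    (y : Fin (N + 1) → Fin q → ℝ) : Set (Fin (N + 2) → Fin n → ℝ) :=
  {x | ∃ f, (x, f) ∈ NSet F C B ∧ Jfun H Q R y f x ≤ 1}

/-- `ℓ({x_k}) = Σ_{k=0}^{N+1} (ℓ_k, x_k)`. -/
def lfun {N n : ℕ} (l : Fin (N + 2) → Fin n → ℝ) (x : Fin (N + 2) → Fin n → ℝ) : ℝ :=
  ∑ k : Fin (N + 2), l k ⬝ᵥ x k

/-- Membership of the family `{ℓ_k}_{0}^{N+1}` in the set `L`: there are
`z_k ∈ ℝ^m` and `u_k ∈ ℝ^q` with `ℓ_k = F_k' z_k - C_k' z_{k+1} + H_k' u_k`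
(k = 0,…,N) and `F_{N+1}' z_{N+1} = ℓ_{N+1}`. -/
def memL {N m n q : ℕ} (F : Fin (N + 2) → Matrix (Fin m) (Fin n) ℝ)
    (C : Fin (N + 1) → Matrix (Fin m) (Fin n) ℝ)
    (H : Fin (N + 1) → Matrix (Fin q) (Fin n) ℝ)
    (l : Fin (N + 2) → Fin n → ℝ) : Prop :=
  ∃ (z : Fin (N + 2) → Fin m → ℝ) (u : Fin (N + 1) → Fin q → ℝ),
    (∀ k : Fin (N + 1),
      l k.castSucc =
        (F k.castSucc)ᵀ *ᵥ z k.castSucc - (C k)ᵀ *ᵥ z k.succ + (H k)ᵀ *ᵥ u k) ∧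
    (F (Fin.last (N + 1)))ᵀ *ᵥ z (Fin.last (N + 1)) = l (Fin.last (N + 1))

/-- `lhat` is a minimax a-posteriori estimation of the linear function `lf` over `G`:
`sup_{x ∈ G} |lf x - lhat| = inf_{x̃ ∈ G} sup_{x ∈ G} |lf x - lf x̃|`
(suprema and infima taken in the extended reals). -/
def IsMinimaxEstimate {N n : ℕ} (G : Set (Fin (N + 2) → Fin n → ℝ))
    (lf : (Fin (N + 2) → Fin n → ℝ) → ℝ) (lhat : ℝ) : Prop :=
  (⨆ x ∈ G, (↑|lf x - lhat| : EReal)) =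
    ⨅ xt ∈ G, ⨆ x ∈ G, (↑|lf x - lf xt| : EReal)

/-- The boundary-value system
`F_k' z_k - C_k' z_{k+1} = H_k' R_k (y_k - H_k x̂_k)` (k = 0,…,N),
`F_{k+1} x̂_{k+1} - C_k x̂_k = B_k Q_k⁻¹ B_k' z_{k+1}` (k = 0,…,N),
`F_0 x̂_0 = B_{-1} Q_{-1}⁻¹ B_{-1}' z_0`, `F_{N+1}' z_{N+1} = 0`. -/
def BVP {N m n p q : ℕ} (F : Fin (N + 2) → Matrix (Fin m) (Fin n) ℝ)
    (C : Fin (N + 1) → Matrix (Fin m) (Fin n) ℝ)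
    (H : Fin (N + 1) → Matrix (Fin q) (Fin n) ℝ)
    (B : Fin (N + 2) → Matrix (Fin m) (Fin p) ℝ)
    (Q : Fin (N + 2) → Matrix (Fin p) (Fin p) ℝ)
    (R : Fin (N + 1) → Matrix (Fin q) (Fin q) ℝ)
    (y : Fin (N + 1) → Fin q → ℝ)
    (xh : Fin (N + 2) → Fin n → ℝ) (z : Fin (N + 2) → Fin m → ℝ) : Prop :=
  (∀ k : Fin (N + 1),
      (F k.castSucc)ᵀ *ᵥ z k.castSucc - (C k)ᵀ *ᵥ z k.succ =
        (H k)ᵀ *ᵥ (R k *ᵥ (y k - H k *ᵥ xh k.castSucc))) ∧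
  (∀ k : Fin (N + 1),
      F k.succ *ᵥ xh k.succ - C k *ᵥ xh k.castSucc =
        B k.succ *ᵥ ((Q k.succ)⁻¹ *ᵥ ((B k.succ)ᵀ *ᵥ z k.succ))) ∧
  F 0 *ᵥ xh 0 = B 0 *ᵥ ((Q 0)⁻¹ *ᵥ ((B 0)ᵀ *ᵥ z 0)) ∧
  (F (Fin.last (N + 1)))ᵀ *ᵥ z (Fin.last (N + 1)) = 0

lemma symq_dot {d : ℕ} (M : Matrix (Fin d) (Fin d) ℝ) (hM : Mᵀ = M) (a b : Fin d → ℝ) :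
    (M *ᵥ b) ⬝ᵥ a = (M *ᵥ a) ⬝ᵥ b := by
  rw [dotProduct_comm, Matrix.dotProduct_mulVec, ← Matrix.mulVec_transpose, hM]

lemma sq_expand {d : ℕ} (M : Matrix (Fin d) (Fin d) ℝ) (hM : Mᵀ = M) (a b : Fin d → ℝ) :
    (M *ᵥ (a + b)) ⬝ᵥ (a + b)
      = (M *ᵥ a) ⬝ᵥ a + ((M *ᵥ b) ⬝ᵥ b + 2 * ((M *ᵥ a) ⬝ᵥ b)) := by
  rw [Matrix.mulVec_add, add_dotProduct, dotProduct_add, dotProduct_add,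
    symq_dot M hM a b]
  ring

lemma fin_telescope {d : ℕ} (g : Fin (d + 2) → ℝ) :
    ∑ k : Fin (d + 1), (g k.succ - g k.castSucc) = g (Fin.last (d + 1)) - g 0 := by
  rw [Finset.sum_sub_distrib]
  have h1 : ∑ j : Fin (d + 2), g j = g 0 + ∑ k : Fin (d + 1), g k.succ :=
    Fin.sum_univ_succ g
  have h2 : ∑ j : Fin (d + 2), g j
      = (∑ k : Fin (d + 1), g k.castSucc) + g (Fin.last (d + 1)) :=
    Fin.sum_univ_castSucc g
  linarith

lemma bt_dot {a b : ℕ} (A : Matrix (Fin a) (Fin b) ℝ) (w : Fin a → ℝ) (v : Fin b → ℝ) :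
    (Aᵀ *ᵥ w) ⬝ᵥ v = w ⬝ᵥ (A *ᵥ v) := by
  rw [Matrix.mulVec_transpose, ← Matrix.dotProduct_mulVec]

lemma cross_zero {N m n p q : ℕ}
    (F : Fin (N + 2) → Matrix (Fin m) (Fin n) ℝ)
    (C : Fin (N + 1) → Matrix (Fin m) (Fin n) ℝ)
    (H : Fin (N + 1) → Matrix (Fin q) (Fin n) ℝ)
    (B : Fin (N + 2) → Matrix (Fin m) (Fin p) ℝ)
    (Q : Fin (N + 2) → Matrix (Fin p) (Fin p) ℝ)
    (R : Fin (N + 1) → Matrix (Fin q) (Fin q) ℝ)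
    (y : Fin (N + 1) → Fin q → ℝ)
    (hQ : ∀ j, (Q j).PosDef)
    (xh : Fin (N + 2) → Fin n → ℝ) (z : Fin (N + 2) → Fin m → ℝ)
    (hbvp : BVP F C H B Q R y xh z)
    (x : Fin (N + 2) → Fin n → ℝ) (f : Fin (N + 2) → Fin p → ℝ)
    (hN : (x, f) ∈ NSet F C B) :
    ∑ j : Fin (N + 2),
        (Q j *ᵥ ((Q j)⁻¹ *ᵥ ((B j)ᵀ *ᵥ z j))) ⬝ᵥ (f j - (Q j)⁻¹ *ᵥ ((B j)ᵀ *ᵥ z j))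
      = ∑ k : Fin (N + 1),
        (R k *ᵥ (y k - H k *ᵥ xh k.castSucc)) ⬝ᵥ (H k *ᵥ (x k.castSucc - xh k.castSucc)) := by
  set fh : Fin (N + 2) → Fin p → ℝ := fun j => (Q j)⁻¹ *ᵥ ((B j)ᵀ *ᵥ z j) with hfh
  set dx : Fin (N + 2) → Fin n → ℝ := fun j => x j - xh j with hdx
  have hQfh : ∀ j, Q j *ᵥ fh j = (B j)ᵀ *ᵥ z j := by
    intro j
    rw [hfh]
    rw [Matrix.mulVec_mulVec, Matrix.mul_nonsing_inv _ (hQ j).det_pos.ne'.isUnit,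
      Matrix.one_mulVec]
  set g : Fin (N + 2) → ℝ := fun j => z j ⬝ᵥ (F j *ᵥ dx j) with hg
  have hB0 : B 0 *ᵥ (f 0 - fh 0) = F 0 *ᵥ dx 0 := by
    rw [Matrix.mulVec_sub, Matrix.mulVec_sub, ← hN.2]
    have : B 0 *ᵥ fh 0 = F 0 *ᵥ xh 0 := by
      rw [hfh]; exact hbvp.2.2.1.symm
    rw [this]
  have hBk : ∀ k : Fin (N + 1), B k.succ *ᵥ (f k.succ - fh k.succ)
      = F k.succ *ᵥ dx k.succ - C k *ᵥ dx k.castSucc := by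
    intro k
    rw [Matrix.mulVec_sub, ← hN.1 k]
    have : B k.succ *ᵥ fh k.succ = F k.succ *ᵥ xh k.succ - C k *ᵥ xh k.castSucc := by
      rw [hfh]; exact (hbvp.2.1 k).symm
    rw [this, hdx]
    simp only [Matrix.mulVec_sub]
    abel
  -- LHS as sum of z ⬝ (B df)
  have hlhs : ∀ j, (Q j *ᵥ fh j) ⬝ᵥ (f j - fh j) = z j ⬝ᵥ (B j *ᵥ (f j - fh j)) := by
    intro j; rw [hQfh j, bt_dot]
  have hrhs : ∀ k : Fin (N + 1),
      (R k *ᵥ (y k - H k *ᵥ xh k.castSucc)) ⬝ᵥ (H k *ᵥ dx k.castSucc)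
        = g k.castSucc - z k.succ ⬝ᵥ (C k *ᵥ dx k.castSucc) := by
    intro k
    rw [← bt_dot (H k), ← hbvp.1 k, sub_dotProduct, bt_dot, bt_dot, hg]
  calc ∑ j : Fin (N + 2), (Q j *ᵥ fh j) ⬝ᵥ (f j - fh j)
      = ∑ j : Fin (N + 2), z j ⬝ᵥ (B j *ᵥ (f j - fh j)) := by
        exact Finset.sum_congr rfl fun j _ => hlhs j
    _ = z 0 ⬝ᵥ (B 0 *ᵥ (f 0 - fh 0))
        + ∑ k : Fin (N + 1), z k.succ ⬝ᵥ (B k.succ *ᵥ (f k.succ - fh k.succ)) :=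
        Fin.sum_univ_succ _
    _ = g 0 + ∑ k : Fin (N + 1), (g k.succ - z k.succ ⬝ᵥ (C k *ᵥ dx k.castSucc)) := by
        rw [hB0]
        congr 1
        refine Finset.sum_congr rfl fun k _ => ?_
        rw [hBk k, dotProduct_sub, hg]
    _ = ∑ k : Fin (N + 1), (g k.castSucc - z k.succ ⬝ᵥ (C k *ᵥ dx k.castSucc)) := by
        have htel := fin_telescope g
        have hlast : g (Fin.last (N + 1)) = 0 := by
          rw [hg]
          simp only
          rw [Matrix.dotProduct_mulVec, ← Matrix.mulVec_transpose, hbvp.2.2.2,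
            zero_dotProduct]
        have h1 : ∑ k : Fin (N + 1), (g k.succ - z k.succ ⬝ᵥ (C k *ᵥ dx k.castSucc))
            = (∑ k : Fin (N + 1), (g k.succ - g k.castSucc))
              + ∑ k : Fin (N + 1), (g k.castSucc - z k.succ ⬝ᵥ (C k *ᵥ dx k.castSucc)) := by
          rw [← Finset.sum_add_distrib]
          exact Finset.sum_congr rfl fun k _ => by ring
        rw [h1, htel, hlast]
        ring
    _ = ∑ k : Fin (N + 1),
        (R k *ᵥ (y k - H k *ᵥ xh k.castSucc)) ⬝ᵥ (H k *ᵥ dx k.castSucc) := by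
        exact Finset.sum_congr rfl fun k _ => (hrhs k).symm

lemma Jexpand {N m n p q : ℕ}
    (F : Fin (N + 2) → Matrix (Fin m) (Fin n) ℝ)
    (C : Fin (N + 1) → Matrix (Fin m) (Fin n) ℝ)
    (H : Fin (N + 1) → Matrix (Fin q) (Fin n) ℝ)
    (B : Fin (N + 2) → Matrix (Fin m) (Fin p) ℝ)
    (Q : Fin (N + 2) → Matrix (Fin p) (Fin p) ℝ)
    (R : Fin (N + 1) → Matrix (Fin q) (Fin q) ℝ)
    (y : Fin (N + 1) → Fin q → ℝ)
    (hQ : ∀ j, (Q j).PosDef) (hR : ∀ k, (R k).PosDef)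
    (xh : Fin (N + 2) → Fin n → ℝ) (z : Fin (N + 2) → Fin m → ℝ)
    (hbvp : BVP F C H B Q R y xh z)
    (x : Fin (N + 2) → Fin n → ℝ) (f : Fin (N + 2) → Fin p → ℝ)
    (hN : (x, f) ∈ NSet F C B) :
    Jfun H Q R y f x
      = Jfun H Q R y (fun j => (Q j)⁻¹ *ᵥ ((B j)ᵀ *ᵥ z j)) xh
        + ((∑ j : Fin (N + 2),
            (Q j *ᵥ (f j - (Q j)⁻¹ *ᵥ ((B j)ᵀ *ᵥ z j)))
              ⬝ᵥ (f j - (Q j)⁻¹ *ᵥ ((B j)ᵀ *ᵥ z j)))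
          + ∑ k : Fin (N + 1),
            (R k *ᵥ (H k *ᵥ (x k.castSucc - xh k.castSucc)))
              ⬝ᵥ (H k *ᵥ (x k.castSucc - xh k.castSucc))) := by
  set fh : Fin (N + 2) → Fin p → ℝ := fun j => (Q j)⁻¹ *ᵥ ((B j)ᵀ *ᵥ z j) with hfh
  have hQsym : ∀ j, (Q j)ᵀ = Q j := fun j => (hQ j).isHermitian.eq
  have hRsym : ∀ k, (R k)ᵀ = R k := fun k => (hR k).isHermitian.eq
  have hA : ∀ j, (Q j *ᵥ f j) ⬝ᵥ f j
      = (Q j *ᵥ fh j) ⬝ᵥ fh j + ((Q j *ᵥ (f j - fh j)) ⬝ᵥ (f j - fh j)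
        + 2 * ((Q j *ᵥ fh j) ⬝ᵥ (f j - fh j))) := by
    intro j
    have h := sq_expand (Q j) (hQsym j) (fh j) (f j - fh j)
    simpa using h
  have hB : ∀ k : Fin (N + 1),
      (R k *ᵥ (y k - H k *ᵥ x k.castSucc)) ⬝ᵥ (y k - H k *ᵥ x k.castSucc)
        = (R k *ᵥ (y k - H k *ᵥ xh k.castSucc)) ⬝ᵥ (y k - H k *ᵥ xh k.castSucc)
          + ((R k *ᵥ (H k *ᵥ (x k.castSucc - xh k.castSucc)))
              ⬝ᵥ (H k *ᵥ (x k.castSucc - xh k.castSucc))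
            - 2 * ((R k *ᵥ (y k - H k *ᵥ xh k.castSucc))
              ⬝ᵥ (H k *ᵥ (x k.castSucc - xh k.castSucc)))) := by
    intro k
    have hsplit : y k - H k *ᵥ x k.castSucc
        = (y k - H k *ᵥ xh k.castSucc) + (-(H k *ᵥ (x k.castSucc - xh k.castSucc))) := by
      rw [Matrix.mulVec_sub]; abel
    rw [hsplit]
    have h := sq_expand (R k) (hRsym k) (y k - H k *ᵥ xh k.castSucc)
      (-(H k *ᵥ (x k.castSucc - xh k.castSucc)))
    rw [h]
    simp only [Matrix.mulVec_neg, neg_dotProduct, dotProduct_neg, neg_neg]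
    ring
  have hcross := cross_zero F C H B Q R y hQ xh z hbvp x f hN
  unfold Jfun
  rw [Finset.sum_congr rfl fun j _ => hA j, Finset.sum_congr rfl fun k _ => hB k]
  rw [Finset.sum_add_distrib, Finset.sum_add_distrib, Finset.sum_add_distrib,
    Finset.sum_sub_distrib, ← Finset.mul_sum, ← Finset.mul_sum, hcross]
  ring

lemma psd_dot {d : ℕ} (M : Matrix (Fin d) (Fin d) ℝ) (hM : M.PosDef) (v : Fin d → ℝ) :
    0 ≤ (M *ᵥ v) ⬝ᵥ v := by
  have := hM.posSemidef.re_dotProduct_nonneg v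
  simpa [dotProduct_comm] using this

theorem stmt0' {N m n p q : ℕ}
    (F : Fin (N + 2) → Matrix (Fin m) (Fin n) ℝ)
    (C : Fin (N + 1) → Matrix (Fin m) (Fin n) ℝ)
    (H : Fin (N + 1) → Matrix (Fin q) (Fin n) ℝ)
    (B : Fin (N + 2) → Matrix (Fin m) (Fin p) ℝ)
    (Q : Fin (N + 2) → Matrix (Fin p) (Fin p) ℝ)
    (R : Fin (N + 1) → Matrix (Fin q) (Fin q) ℝ)
    (y : Fin (N + 1) → Fin q → ℝ)
    (hQ : ∀ j, (Q j).PosDef) (hR : ∀ k, (R k).PosDef)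
    (hG : (GSet F C H B Q R y).Nonempty)
    (l : Fin (N + 2) → Fin n → ℝ) (hl : memL F C H l)
    (xh : Fin (N + 2) → Fin n → ℝ) (z : Fin (N + 2) → Fin m → ℝ)
    (hbvp : BVP F C H B Q R y xh z) :
    IsMinimaxEstimate (GSet F C H B Q R y) (lfun l) (∑ k : Fin (N + 2), l k ⬝ᵥ xh k) := by
  classical
  set G := GSet F C H B Q R y with hGdef
  set fh : Fin (N + 2) → Fin p → ℝ := fun j => (Q j)⁻¹ *ᵥ ((B j)ᵀ *ᵥ z j) with hfh
  -- (xh, fh) satisfies the constraints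
  have hNh : (xh, fh) ∈ NSet F C B := ⟨fun k => hbvp.2.1 k, hbvp.2.2.1⟩
  -- quadratic remainder is nonnegative
  have hquad : ∀ (x : Fin (N + 2) → Fin n → ℝ) (f : Fin (N + 2) → Fin p → ℝ),
      0 ≤ (∑ j : Fin (N + 2), (Q j *ᵥ (f j - fh j)) ⬝ᵥ (f j - fh j))
        + ∑ k : Fin (N + 1),
            (R k *ᵥ (H k *ᵥ (x k.castSucc - xh k.castSucc)))
              ⬝ᵥ (H k *ᵥ (x k.castSucc - xh k.castSucc)) := by
    intro x f
    have h1 : 0 ≤ ∑ j : Fin (N + 2), (Q j *ᵥ (f j - fh j)) ⬝ᵥ (f j - fh j) :=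
      Finset.sum_nonneg fun j _ => psd_dot (Q j) (hQ j) _
    have h2 : 0 ≤ ∑ k : Fin (N + 1),
        (R k *ᵥ (H k *ᵥ (x k.castSucc - xh k.castSucc)))
          ⬝ᵥ (H k *ᵥ (x k.castSucc - xh k.castSucc)) :=
      Finset.sum_nonneg fun k _ => psd_dot (R k) (hR k) _
    linarith
  -- xh ∈ G
  have hxhG : xh ∈ G := by
    obtain ⟨x0, f0, hN0, hJ0⟩ := hG
    refine ⟨fh, hNh, ?_⟩
    have hexp := Jexpand F C H B Q R y hQ hR xh z hbvp x0 f0 hN0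
    have := hquad x0 f0
    rw [hexp] at hJ0
    linarith
  -- reflection through xh preserves G
  have hrefl : ∀ x ∈ G, ∃ x' ∈ G, lfun l x' = 2 * lfun l xh - lfun l x := by
    intro x hx
    obtain ⟨f, hNx, hJx⟩ := hx
    refine ⟨fun j => xh j + (xh j - x j), ?_, ?_⟩
    · refine ⟨fun j => fh j + (fh j - f j), ⟨?_, ?_⟩, ?_⟩
      · intro k
        simp only [Matrix.mulVec_add, Matrix.mulVec_sub]
        rw [← hNh.1 k, ← hNx.1 k]
        abel
      · simp only [Matrix.mulVec_add, Matrix.mulVec_sub]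
        rw [← hNh.2, ← hNx.2]
      · have hN' : ((fun j => xh j + (xh j - x j)),
            (fun j => fh j + (fh j - f j))) ∈ NSet F C B := by
          refine ⟨?_, ?_⟩
          · intro k
            simp only [Matrix.mulVec_add, Matrix.mulVec_sub]
            rw [← hNh.1 k, ← hNx.1 k]
            abel
          · simp only [Matrix.mulVec_add, Matrix.mulVec_sub]
            rw [← hNh.2, ← hNx.2]
        have hexp' := Jexpand F C H B Q R y hQ hR xh z hbvp _ _ hN'
        have hexp := Jexpand F C H B Q R y hQ hR xh z hbvp x f hNx
        rw [hexp] at hJx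
        rw [hexp']
        have heq1 : ∀ j : Fin (N + 2),
            (Q j *ᵥ ((fh j + (fh j - f j)) - fh j)) ⬝ᵥ ((fh j + (fh j - f j)) - fh j)
              = (Q j *ᵥ (f j - fh j)) ⬝ᵥ (f j - fh j) := by
          intro j
          have hv : (fh j + (fh j - f j)) - fh j = -(f j - fh j) := by ring
          simp only [hv, Matrix.mulVec_neg, neg_dotProduct, dotProduct_neg,
            neg_neg]
        have heq2 : ∀ k : Fin (N + 1),
            (R k *ᵥ (H k *ᵥ ((xh k.castSucc + (xh k.castSucc - x k.castSucc))
                - xh k.castSucc)))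
              ⬝ᵥ (H k *ᵥ ((xh k.castSucc + (xh k.castSucc - x k.castSucc)) - xh k.castSucc))
              = (R k *ᵥ (H k *ᵥ (x k.castSucc - xh k.castSucc)))
                ⬝ᵥ (H k *ᵥ (x k.castSucc - xh k.castSucc)) := by
          intro k
          have hv : (xh k.castSucc + (xh k.castSucc - x k.castSucc)) - xh k.castSucc
              = -(x k.castSucc - xh k.castSucc) := by ring
          simp only [hv, Matrix.mulVec_neg, neg_dotProduct, dotProduct_neg,
            neg_neg]
        rw [Finset.sum_congr rfl fun j _ => heq1 j, Finset.sum_congr rfl fun k _ => heq2 k]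
        linarith
    · unfold lfun
      have hterm : ∀ j : Fin (N + 2), l j ⬝ᵥ (xh j + (xh j - x j))
          = 2 * (l j ⬝ᵥ xh j) - l j ⬝ᵥ x j := by
        intro j
        rw [dotProduct_add, dotProduct_sub]
        ring
      rw [Finset.sum_congr rfl fun j _ => hterm j, Finset.sum_sub_distrib, ← Finset.mul_sum]
  -- the final minimax identity
  show (⨆ x ∈ G, (↑|lfun l x - lfun l xh| : EReal))
      = ⨅ xt ∈ G, ⨆ x ∈ G, (↑|lfun l x - lfun l xt| : EReal)
  apply le_antisymm
  · refine le_iInf₂ fun xt hxt => ?_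
    refine iSup₂_le fun x hx => ?_
    obtain ⟨x', hx'G, hx'v⟩ := hrefl x hx
    have key : |lfun l x - lfun l xh| ≤ |lfun l x - lfun l xt|
        ∨ |lfun l x - lfun l xh| ≤ |lfun l x' - lfun l xt| := by
      rw [hx'v]
      by_contra hc
      push_neg at hc
      have h1 : |(lfun l x - lfun l xt) - ((2 * lfun l xh - lfun l x) - lfun l xt)|
          ≤ |lfun l x - lfun l xt| + |(2 * lfun l xh - lfun l x) - lfun l xt| :=
        abs_sub _ _
      have h2 : (lfun l x - lfun l xt) - ((2 * lfun l xh - lfun l x) - lfun l xt)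
          = 2 * (lfun l x - lfun l xh) := by ring
      rw [h2, abs_mul, abs_two] at h1
      have := abs_nonneg (lfun l x - lfun l xh)
      linarith [hc.1, hc.2]
    rcases key with hk | hk
    · exact le_trans (EReal.coe_le_coe_iff.mpr hk)
        (le_iSup₂ (f := fun x'' (_ : x'' ∈ G) => (↑|lfun l x'' - lfun l xt| : EReal)) x hx)
    · exact le_trans (EReal.coe_le_coe_iff.mpr hk)
        (le_iSup₂ (f := fun x'' (_ : x'' ∈ G) => (↑|lfun l x'' - lfun l xt| : EReal)) x' hx'G)
  · exact iInf₂_le xh hxhG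

/-- if `G_y ≠ ∅`, `{ℓ_k} ∈ L` and `({x̂_k},{z_k})` solves the
boundary-value system, then `ℓ̂ = Σ (ℓ_k, x̂_k)` is a minimax a-posteriori
estimation of `ℓ`. -/
theorem stmt0 {N m n p q : ℕ}
    (F : Fin (N + 2) → Matrix (Fin m) (Fin n) ℝ)
    (C : Fin (N + 1) → Matrix (Fin m) (Fin n) ℝ)
    (H : Fin (N + 1) → Matrix (Fin q) (Fin n) ℝ)
    (B : Fin (N + 2) → Matrix (Fin m) (Fin p) ℝ)
    (Q : Fin (N + 2) → Matrix (Fin p) (Fin p) ℝ)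
    (R : Fin (N + 1) → Matrix (Fin q) (Fin q) ℝ)
    (y : Fin (N + 1) → Fin q → ℝ)
    (hQ : ∀ j, (Q j).PosDef) (hR : ∀ k, (R k).PosDef)
    (hG : (GSet F C H B Q R y).Nonempty)
    (l : Fin (N + 2) → Fin n → ℝ) (hl : memL F C H l)
    (xh : Fin (N + 2) → Fin n → ℝ) (z : Fin (N + 2) → Fin m → ℝ)
    (hbvp : BVP F C H B Q R y xh z) :
    IsMinimaxEstimate (GSet F C H B Q R y) (lfun l) (∑ k : Fin (N + 2), l k ⬝ᵥ xh k) := by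
  exact stmt0' F C H B Q R y hQ hR hG l hl xh z hbvp
end

section
/- Suppose the a-posteriori set G_y is nonempty, the family {ℓ_k}_{k=0}^{N+1} belongs to L, ({x̂_k}_{k=0}^{N+1}, {z_k}_{k=0}^{N+1}) is a solution of the boundary-value system F_k' z_k − C_k' z_{k+1} = H_k' R_k (y_k − H_k x̂_k) for k = 0,…,N; F_{k+1} x̂_{k+1} − C_k x̂_k = B_k Q_k^{−1} B_k' z_{k+1} for k = 0,…,N; F_0 x̂_0 = B_{−1} Q_{−1}^{−1} B_{−1}' z_0; F_{N+1}' z_{N+1} = 0, and ({p_k}_{k=0}^{N+1}, {d_k}_{k=0}^{N+1}) is a solution of the system F_{k+1} p_{k+1} = C_k p_k + B_k Q_k^{−1} B_k' d_{k+1} for k = 0,…,N; F_k' d_k = C_k' d_{k+1} + ℓ_k − H_k' R_k H_k p_k for k = 0,…,N; F_{N+1}' d_{N+1} = ℓ_{N+1}; F_0 p_0 = B_{−1} Q_{−1}^{−1} B_{−1}' d_0. Then the minimax a-posteriori error of the estimation ℓ̂ = Σ_{k=0}^{N+1} (ℓ_k, x̂_k) equals σ̂ = (1 − Σ_{k=0}^{N}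 (y_k, R_k(y_k − H_k x̂_k)))^{1/2} · (Σ_{k=0}^{N+1} (ℓ_k, p_k))^{1/2}. -/
/-!
The constraint set `𝒩` is a linear space and `J_y` is a quadratic function on it. By summation by
parts, the boundary-value system says that `v̂ = (x̂, Q⁻¹B'z)` is the minimiser of `J_y` on `𝒩`:
`J_y(v̂ + w) = J_y(v̂) + β(w, w)` for `w ∈ 𝒩`, where `β` is the bilinear form of the homogeneous part
of `J_y`, and `J_y(v̂) = Σ (y_k, R_k(y_k - H_k x̂_k))`. So `G_y` is the projection of the ellipsoid
`v̂ + {w ∈ 𝒩 | β(w, w) ≤ 1 - J_y(v̂)}`, which is symmetric about `v̂`; this makes `ℓ(x̂)` a minimax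
estimate. The second system says that `p̂ = (p, Q⁻¹B'd)` represents `ℓ` on `𝒩` through `β`, so by
Cauchy–Schwarz the supremum of `|ℓ(w)|` over the ellipsoid is `(1 - J_y(v̂))^½ β(p̂, p̂)^½`, attained
at a multiple of `p̂`, and `β(p̂, p̂) = ℓ(p)`.
-/

open Matrix

/-- The auxiliary system for `({p_k},{d_k})`:
`F_{k+1} p_{k+1} = C_k p_k + B_k Q_k⁻¹ B_k' d_{k+1}` (k = 0,…,N),
`F_k' d_k = C_k' d_{k+1} + ℓ_k - H_k' R_k H_k p_k` (k = 0,…,N),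
`F_{N+1}' d_{N+1} = ℓ_{N+1}`, `F_0 p_0 = B_{-1} Q_{-1}⁻¹ B_{-1}' d_0`. -/
def BVP2 {N m n p q : ℕ} (F : Fin (N + 2) → Matrix (Fin m) (Fin n) ℝ)
    (C : Fin (N + 1) → Matrix (Fin m) (Fin n) ℝ)
    (H : Fin (N + 1) → Matrix (Fin q) (Fin n) ℝ)
    (B : Fin (N + 2) → Matrix (Fin m) (Fin p) ℝ)
    (Q : Fin (N + 2) → Matrix (Fin p) (Fin p) ℝ)
    (R : Fin (N + 1) → Matrix (Fin q) (Fin q) ℝ)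
    (l : Fin (N + 2) → Fin n → ℝ)
    (pv : Fin (N + 2) → Fin n → ℝ) (d : Fin (N + 2) → Fin m → ℝ) : Prop :=
  (∀ k : Fin (N + 1),
      F k.succ *ᵥ pv k.succ =
        C k *ᵥ pv k.castSucc + B k.succ *ᵥ ((Q k.succ)⁻¹ *ᵥ ((B k.succ)ᵀ *ᵥ d k.succ))) ∧
  (∀ k : Fin (N + 1),
      (F k.castSucc)ᵀ *ᵥ d k.castSucc =
        (C k)ᵀ *ᵥ d k.succ + l k.castSucc - (H k)ᵀ *ᵥ (R k *ᵥ (H k *ᵥ pv k.castSucc))) ∧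
  (F (Fin.last (N + 1)))ᵀ *ᵥ d (Fin.last (N + 1)) = l (Fin.last (N + 1)) ∧
  F 0 *ᵥ pv 0 = B 0 *ᵥ ((Q 0)⁻¹ *ᵥ ((B 0)ᵀ *ᵥ d 0))

namespace Matrix

variable {ι κ : Type*} [Fintype ι] [Fintype κ]

lemma transpose_mulVec_dotProduct (M : Matrix ι κ ℝ) (a : ι → ℝ) (b : κ → ℝ) :
    (Mᵀ *ᵥ a) ⬝ᵥ b = a ⬝ᵥ (M *ᵥ b) := by
  rw [mulVec_transpose, dotProduct_mulVec]

lemma IsHermitian.mulVec_dotProduct_comm {M : Matrix ι ι ℝ} (hM : M.IsHermitian)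
    (a b : ι → ℝ) : (M *ᵥ a) ⬝ᵥ b = (M *ᵥ b) ⬝ᵥ a := by
  rw [dotProduct_comm, ← transpose_mulVec_dotProduct, ← conjTranspose_eq_transpose_of_trivial,
    hM.eq]

lemma IsHermitian.mulVec_add_dotProduct_add {M : Matrix ι ι ℝ} (hM : M.IsHermitian)
    (a b : ι → ℝ) :
    (M *ᵥ (a + b)) ⬝ᵥ (a + b) = (M *ᵥ a) ⬝ᵥ a + (M *ᵥ b) ⬝ᵥ b + 2 * ((M *ᵥ a) ⬝ᵥ b) := by
  simp only [mulVec_add, add_dotProduct, dotProduct_add, hM.mulVec_dotProduct_comm b a]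
  ring

lemma IsHermitian.mulVec_sub_dotProduct_sub {M : Matrix ι ι ℝ} (hM : M.IsHermitian)
    (a b : ι → ℝ) :
    (M *ᵥ (a - b)) ⬝ᵥ (a - b) = (M *ᵥ a) ⬝ᵥ a + (M *ᵥ b) ⬝ᵥ b - 2 * ((M *ᵥ a) ⬝ᵥ b) := by
  simp only [mulVec_sub, sub_dotProduct, dotProduct_sub, hM.mulVec_dotProduct_comm b a]
  ring

lemma PosSemidef.mulVec_dotProduct_self_nonneg {M : Matrix ι ι ℝ} (hM : M.PosSemidef)
    (a : ι → ℝ) : 0 ≤ (M *ᵥ a) ⬝ᵥ a := by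
  simpa [dotProduct_comm] using hM.dotProduct_mulVec_nonneg a

end Matrix

section Ellipsoid

variable {V : Type*} [AddCommGroup V] [Module ℝ V] {β : LinearMap.BilinForm ℝ V}
  {S : Submodule ℝ V} {J ℓ : V → ℝ} {v₀ p : V}

lemma abs_apply_le_sqrt_mul_sqrt (hβ : ∀ v, 0 ≤ β v v) (hsymm : LinearMap.IsSymm β) (v w : V) :
    |β v w| ≤ √(β v v) * √(β w w) := by
  rw [← Real.sqrt_mul (hβ v)]
  exact Real.abs_le_sqrt (β.apply_sq_le_of_symm hβ hsymm v w)

theorem iSup_abs_sub_eq_sqrt_mul_sqrt (hβ : ∀ v, 0 ≤ β v v) (hsymm : LinearMap.IsSymm β)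
    (hv₀ : v₀ ∈ S) (hp : p ∈ S) (hJ : ∀ w ∈ S, J (v₀ + w) = J v₀ + β w w)
    (hℓ : ∀ w ∈ S, ℓ (v₀ + w) = ℓ v₀ + β p w) (hJv₀ : J v₀ ≤ 1) :
    ⨆ v ∈ {v | v ∈ S ∧ J v ≤ 1}, (↑|ℓ v - ℓ v₀| : EReal) =
      ((√(1 - J v₀) * √(β p p) : ℝ) : EReal) := by
  refine le_antisymm (iSup₂_le fun v ⟨hvS, hJv⟩ => ?_) ?_
  · obtain ⟨w, hwS, rfl⟩ : ∃ w ∈ S, v = v₀ + w := ⟨v - v₀, S.sub_mem hvS hv₀, by abel⟩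
    have hww : β w w ≤ 1 - J v₀ := by linarith [hJ w hwS]
    rw [EReal.coe_le_coe_iff, hℓ w hwS, add_sub_cancel_left, mul_comm]
    exact (abs_apply_le_sqrt_mul_sqrt hβ hsymm p w).trans
      (mul_le_mul_of_nonneg_left (Real.sqrt_le_sqrt hww) (Real.sqrt_nonneg _))
  · -- Cauchy–Schwarz is sharp along `p`; `t` puts `v₀ + t • p` on the boundary of the ellipsoid.
    set t := √((1 - J v₀) / β p p) with ht
    have htp : t * β p p = √(1 - J v₀) * √(β p p) := by
      rw [ht, Real.sqrt_div (by linarith), div_mul_eq_mul_div, mul_div_assoc, Real.div_sqrt]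
    have htt : t ^ 2 * β p p ≤ 1 - J v₀ := by
      rw [Real.sq_sqrt (div_nonneg (by linarith) (hβ p))]
      rcases (hβ p).eq_or_lt with h | h
      · rw [← h, mul_zero]; linarith
      · rw [div_mul_cancel₀ _ h.ne']
    have hmem : v₀ + t • p ∈ {v | v ∈ S ∧ J v ≤ 1} := by
      refine ⟨S.add_mem hv₀ (S.smul_mem t hp), ?_⟩
      rw [hJ _ (S.smul_mem t hp)]
      simp only [LinearMap.map_smul, LinearMap.smul_apply, smul_eq_mul]
      nlinarith
    refine le_iSup₂_of_le (v₀ + t • p) hmem (le_of_eq ?_)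
    rw [hℓ _ (S.smul_mem t hp), add_sub_cancel_left, LinearMap.map_smul, smul_eq_mul, htp,
      abs_of_nonneg (by positivity)]

lemma isMinOn_of_forall_add_eq_add (hβ : ∀ v, 0 ≤ β v v) (hv₀ : v₀ ∈ S)
    (hJ : ∀ w ∈ S, J (v₀ + w) = J v₀ + β w w) : IsMinOn J S v₀ :=
  isMinOn_iff.2 fun v hv => by
    have := hJ (v - v₀) (S.sub_mem hv hv₀)
    rw [add_sub_cancel] at this
    linarith [hβ (v - v₀)]

lemma exists_reflection_mem (hv₀ : v₀ ∈ S) (hJ : ∀ w ∈ S, J (v₀ + w) = J v₀ + β w w)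
    (hℓ : ∀ w ∈ S, ℓ (v₀ + w) = ℓ v₀ + β p w) {v : V} (hv : v ∈ {v | v ∈ S ∧ J v ≤ 1}) :
    ∃ v' ∈ {v | v ∈ S ∧ J v ≤ 1}, ℓ v + ℓ v' = 2 * ℓ v₀ := by
  obtain ⟨hvS, hJv⟩ := hv
  obtain ⟨w, hwS, rfl⟩ : ∃ w ∈ S, v = v₀ + w := ⟨v - v₀, S.sub_mem hvS hv₀, by abel⟩
  have hw' : -w ∈ S := S.neg_mem hwS
  refine ⟨v₀ + -w, ⟨S.add_mem hv₀ hw', ?_⟩, ?_⟩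
  · rwa [hJ _ hw', LinearMap.map_neg, LinearMap.map_neg, LinearMap.neg_apply, neg_neg, ← hJ w hwS]
  · rw [hℓ w hwS, hℓ _ hw', LinearMap.map_neg]
    ring

end Ellipsoid

theorem isMinimaxEstimate_of_forall_exists_add_eq {N n : ℕ} {G : Set (Fin (N + 2) → Fin n → ℝ)}
    {lf : (Fin (N + 2) → Fin n → ℝ) → ℝ} {c : Fin (N + 2) → Fin n → ℝ} (hc : c ∈ G)
    (hsymm : ∀ x ∈ G, ∃ x' ∈ G, lf x + lf x' = 2 * lf c) :
    IsMinimaxEstimate G lf (lf c) := by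
  refine le_antisymm (le_iInf₂ fun xt _ => iSup₂_le fun x hx => ?_) (iInf₂_le_of_le c hc le_rfl)
  obtain ⟨x', hx', hsum⟩ := hsymm x hx
  have h2 : 2 * |lf x - lf c| ≤ |lf x - lf xt| + |lf x' - lf xt| := by
    calc 2 * |lf x - lf c| = |(lf x - lf xt) - (lf x' - lf xt)| := by
          rw [← abs_two, ← abs_mul]; congr 1; linarith
      _ ≤ _ := abs_sub _ _
  rcases le_total |lf x - lf xt| |lf x' - lf xt| with h | h
  · exact le_iSup₂_of_le x' hx' (EReal.coe_le_coe_iff.2 (by linarith))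
  · exact le_iSup₂_of_le x hx (EReal.coe_le_coe_iff.2 (by linarith))

section Smoother

variable {N m n p q : ℕ}

lemma lfun_add (l x w : Fin (N + 2) → Fin n → ℝ) : lfun l (x + w) = lfun l x + lfun l w := by
  simp only [lfun, Pi.add_apply, dotProduct_add, Finset.sum_add_distrib]

variable (F : Fin (N + 2) → Matrix (Fin m) (Fin n) ℝ) (C : Fin (N + 1) → Matrix (Fin m) (Fin n) ℝ)
  (H : Fin (N + 1) → Matrix (Fin q) (Fin n) ℝ) (B : Fin (N + 2) → Matrix (Fin m) (Fin p) ℝ)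
  (Q : Fin (N + 2) → Matrix (Fin p) (Fin p) ℝ) (R : Fin (N + 1) → Matrix (Fin q) (Fin q) ℝ)

def nSubmodule : Submodule ℝ ((Fin (N + 2) → Fin n → ℝ) × (Fin (N + 2) → Fin p → ℝ)) where
  carrier := NSet F C B
  add_mem' := by
    rintro ⟨x, f⟩ ⟨x', f'⟩ ⟨h, h₀⟩ ⟨h', h₀'⟩
    refine ⟨fun k => ?_, ?_⟩
    · simp only [Prod.fst_add, Prod.snd_add, Pi.add_apply, mulVec_add, ← h k, ← h' k]
      abel
    · simp only [Prod.fst_add, Prod.snd_add, Pi.add_apply, mulVec_add, h₀, h₀']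
  zero_mem' := ⟨fun k => by simp, by simp⟩
  smul_mem' := by
    rintro c ⟨x, f⟩ ⟨h, h₀⟩
    refine ⟨fun k => ?_, ?_⟩
    · simp only [Prod.smul_fst, Prod.smul_snd, Pi.smul_apply, mulVec_smul, ← smul_sub, h k]
    · simp only [Prod.smul_fst, Prod.smul_snd, Pi.smul_apply, mulVec_smul, h₀]

/-- The polar form of the quadratic part of `Jfun`. -/
def jBilin :
    LinearMap.BilinForm ℝ ((Fin (N + 2) → Fin n → ℝ) × (Fin (N + 2) → Fin p → ℝ)) :=
  LinearMap.mk₂ ℝ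
    (fun v w => ∑ j, (Q j *ᵥ v.2 j) ⬝ᵥ w.2 j +
      ∑ k, (R k *ᵥ (H k *ᵥ v.1 k.castSucc)) ⬝ᵥ (H k *ᵥ w.1 k.castSucc))
    (fun _ _ _ => by
      simp only [Prod.fst_add, Prod.snd_add, Pi.add_apply, mulVec_add, add_dotProduct,
        Finset.sum_add_distrib]
      ring)
    (fun _ _ _ => by
      simp only [Prod.smul_fst, Prod.smul_snd, Pi.smul_apply, mulVec_smul, smul_dotProduct,
        smul_eq_mul, ← Finset.mul_sum]
      ring)
    (fun _ _ _ => by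
      simp only [Prod.fst_add, Prod.snd_add, Pi.add_apply, mulVec_add, dotProduct_add,
        Finset.sum_add_distrib]
      ring)
    (fun _ _ _ => by
      simp only [Prod.smul_fst, Prod.smul_snd, Pi.smul_apply, mulVec_smul, dotProduct_smul,
        smul_eq_mul, ← Finset.mul_sum]
      ring)

lemma jBilin_apply (v w : (Fin (N + 2) → Fin n → ℝ) × (Fin (N + 2) → Fin p → ℝ)) :
    jBilin H Q R v w = ∑ j, (Q j *ᵥ v.2 j) ⬝ᵥ w.2 j +
      ∑ k, (R k *ᵥ (H k *ᵥ v.1 k.castSucc)) ⬝ᵥ (H k *ᵥ w.1 k.castSucc) :=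
  rfl

variable {F C H B Q R}

lemma jBilin_self_nonneg (hQ : ∀ j, (Q j).PosSemidef) (hR : ∀ k, (R k).PosSemidef)
    (v : (Fin (N + 2) → Fin n → ℝ) × (Fin (N + 2) → Fin p → ℝ)) : 0 ≤ jBilin H Q R v v :=
  add_nonneg (Finset.sum_nonneg fun j _ => (hQ j).mulVec_dotProduct_self_nonneg _)
    (Finset.sum_nonneg fun k _ => (hR k).mulVec_dotProduct_self_nonneg _)

lemma jBilin_isSymm (hQ : ∀ j, (Q j).IsHermitian) (hR : ∀ k, (R k).IsHermitian) :
    LinearMap.IsSymm (jBilin H Q R) :=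
  ⟨fun v w => by
    simp only [jBilin_apply, RingHom.id_apply, (hQ _).mulVec_dotProduct_comm (v.2 _),
      (hR _).mulVec_dotProduct_comm (H _ *ᵥ v.1 _)]⟩

lemma Jfun_add_add (hQ : ∀ j, (Q j).IsHermitian) (hR : ∀ k, (R k).IsHermitian)
    (y : Fin (N + 1) → Fin q → ℝ) (f g : Fin (N + 2) → Fin p → ℝ)
    (x w : Fin (N + 2) → Fin n → ℝ) :
    Jfun H Q R y (f + g) (x + w) = Jfun H Q R y f x + jBilin H Q R (w, g) (w, g) +
      2 * (∑ j, (Q j *ᵥ f j) ⬝ᵥ g j -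
        ∑ k, (R k *ᵥ (y k - H k *ᵥ x k.castSucc)) ⬝ᵥ (H k *ᵥ w k.castSucc)) := by
  have hres (k : Fin (N + 1)) : y k - H k *ᵥ (x k.castSucc + w k.castSucc) =
      (y k - H k *ᵥ x k.castSucc) - H k *ᵥ w k.castSucc := by
    rw [mulVec_add, sub_add_eq_sub_sub]
  simp only [Jfun, jBilin_apply, Pi.add_apply, hres, (hQ _).mulVec_add_dotProduct_add,
    (hR _).mulVec_sub_dotProduct_sub, Finset.sum_add_distrib, Finset.sum_sub_distrib,
    ← Finset.mul_sum]
  ring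

lemma sum_transpose_mulVec_dotProduct_of_mem_NSet
    {v : (Fin (N + 2) → Fin n → ℝ) × (Fin (N + 2) → Fin p → ℝ)} (hv : v ∈ NSet F C B)
    (z : Fin (N + 2) → Fin m → ℝ) :
    ∑ j, ((B j)ᵀ *ᵥ z j) ⬝ᵥ v.2 j =
      ∑ k : Fin (N + 1), ((F k.castSucc)ᵀ *ᵥ z k.castSucc - (C k)ᵀ *ᵥ z k.succ) ⬝ᵥ v.1 k.castSucc +
        ((F (Fin.last (N + 1)))ᵀ *ᵥ z (Fin.last (N + 1))) ⬝ᵥ v.1 (Fin.last (N + 1)) := by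
  obtain ⟨h, h₀⟩ := hv
  have hlhs : ∑ j, ((B j)ᵀ *ᵥ z j) ⬝ᵥ v.2 j =
      ∑ j, z j ⬝ᵥ (F j *ᵥ v.1 j) - ∑ k : Fin (N + 1), z k.succ ⬝ᵥ (C k *ᵥ v.1 k.castSucc) := by
    simp only [transpose_mulVec_dotProduct]
    rw [Fin.sum_univ_succ, Fin.sum_univ_succ (fun j => z j ⬝ᵥ (F j *ᵥ v.1 j)), ← h₀]
    simp only [← h, dotProduct_sub, Finset.sum_sub_distrib]
    ring
  rw [hlhs, Fin.sum_univ_castSucc (fun j => z j ⬝ᵥ (F j *ᵥ v.1 j))]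
  simp only [sub_dotProduct, transpose_mulVec_dotProduct, Finset.sum_sub_distrib]
  ring

variable (B Q) in
/-- The disturbance `f_{k-1} = Q_{k-1}⁻¹ B_{k-1}' z_k` generated by a costate `z`. -/
noncomputable def disturbance (z : Fin (N + 2) → Fin m → ℝ) : Fin (N + 2) → Fin p → ℝ :=
  fun j => (Q j)⁻¹ *ᵥ ((B j)ᵀ *ᵥ z j)

lemma mulVec_disturbance (hQ : ∀ j, IsUnit (Q j).det) (z : Fin (N + 2) → Fin m → ℝ)
    (j : Fin (N + 2)) : Q j *ᵥ disturbance B Q z j = (B j)ᵀ *ᵥ z j := by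
  rw [disturbance, mulVec_mulVec, mul_nonsing_inv _ (hQ j), one_mulVec]

section BVP

variable {y : Fin (N + 1) → Fin q → ℝ} {xh : Fin (N + 2) → Fin n → ℝ}
  {z : Fin (N + 2) → Fin m → ℝ}

lemma BVP.mem_NSet (h : BVP F C H B Q R y xh z) : (xh, disturbance B Q z) ∈ NSet F C B :=
  ⟨h.2.1, h.2.2.1⟩

lemma BVP.sum_mulVec_disturbance_dotProduct (hQ : ∀ j, IsUnit (Q j).det)
    (h : BVP F C H B Q R y xh z) {v : (Fin (N + 2) → Fin n → ℝ) × (Fin (N + 2) → Fin p → ℝ)}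
    (hv : v ∈ NSet F C B) :
    ∑ j, (Q j *ᵥ disturbance B Q z j) ⬝ᵥ v.2 j =
      ∑ k, (R k *ᵥ (y k - H k *ᵥ xh k.castSucc)) ⬝ᵥ (H k *ᵥ v.1 k.castSucc) := by
  simp only [mulVec_disturbance hQ]
  rw [sum_transpose_mulVec_dotProduct_of_mem_NSet hv, h.2.2.2, zero_dotProduct, add_zero]
  simp only [h.1, transpose_mulVec_dotProduct]

lemma BVP.Jfun_add (hQ : ∀ j, (Q j).PosDef) (hR : ∀ k, (R k).IsHermitian)
    (h : BVP F C H B Q R y xh z) {v : (Fin (N + 2) → Fin n → ℝ) × (Fin (N + 2) → Fin p → ℝ)}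
    (hv : v ∈ NSet F C B) :
    Jfun H Q R y (disturbance B Q z + v.2) (xh + v.1) =
      Jfun H Q R y (disturbance B Q z) xh + jBilin H Q R v v := by
  rw [Jfun_add_add (fun j => (hQ j).isHermitian) hR, h.sum_mulVec_disturbance_dotProduct
    (fun j => (isUnit_iff_isUnit_det _).mp (hQ j).isUnit) hv, sub_self, mul_zero, add_zero]

lemma BVP.Jfun_eq (hQ : ∀ j, IsUnit (Q j).det) (h : BVP F C H B Q R y xh z) :
    Jfun H Q R y (disturbance B Q z) xh =
      ∑ k, y k ⬝ᵥ (R k *ᵥ (y k - H k *ᵥ xh k.castSucc)) := by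
  rw [Jfun, h.sum_mulVec_disturbance_dotProduct hQ h.mem_NSet, ← Finset.sum_add_distrib]
  refine Finset.sum_congr rfl fun k _ => ?_
  rw [← dotProduct_add, add_sub_cancel, dotProduct_comm]

end BVP

section BVP2

variable {l pv : Fin (N + 2) → Fin n → ℝ} {d : Fin (N + 2) → Fin m → ℝ}

lemma BVP2.mem_NSet (h : BVP2 F C H B Q R l pv d) : (pv, disturbance B Q d) ∈ NSet F C B :=
  ⟨fun k => by rw [h.1 k, add_sub_cancel_left]; rfl, h.2.2.2⟩

lemma BVP2.lfun_eq (hQ : ∀ j, IsUnit (Q j).det) (h : BVP2 F C H B Q R l pv d)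
    {v : (Fin (N + 2) → Fin n → ℝ) × (Fin (N + 2) → Fin p → ℝ)} (hv : v ∈ NSet F C B) :
    lfun l v.1 = jBilin H Q R (pv, disturbance B Q d) v := by
  have hstep (k : Fin (N + 1)) :
      (F k.castSucc)ᵀ *ᵥ d k.castSucc - (C k)ᵀ *ᵥ d k.succ =
        l k.castSucc - (H k)ᵀ *ᵥ (R k *ᵥ (H k *ᵥ pv k.castSucc)) := by
    rw [h.2.1 k]
    abel
  simp only [jBilin_apply, mulVec_disturbance hQ]
  rw [sum_transpose_mulVec_dotProduct_of_mem_NSet hv, h.2.2.1, lfun, Fin.sum_univ_castSucc]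
  simp only [hstep, sub_dotProduct, transpose_mulVec_dotProduct, Finset.sum_sub_distrib]
  ring

end BVP2

lemma GSet_eq_image_fst (y : Fin (N + 1) → Fin q → ℝ) :
    GSet F C H B Q R y =
      Prod.fst '' {v | v ∈ nSubmodule F C B ∧ Jfun H Q R y v.2 v.1 ≤ 1} := by
  ext x
  constructor
  · rintro ⟨f, hN, hJ⟩
    exact ⟨(x, f), ⟨hN, hJ⟩, rfl⟩
  · rintro ⟨⟨x, f⟩, ⟨hN, hJ⟩, rfl⟩
    exact ⟨f, hN, hJ⟩

end Smoother

theorem stmt1_general {N m n p q : ℕ}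
    (F : Fin (N + 2) → Matrix (Fin m) (Fin n) ℝ)
    (C : Fin (N + 1) → Matrix (Fin m) (Fin n) ℝ)
    (H : Fin (N + 1) → Matrix (Fin q) (Fin n) ℝ)
    (B : Fin (N + 2) → Matrix (Fin m) (Fin p) ℝ)
    (Q : Fin (N + 2) → Matrix (Fin p) (Fin p) ℝ)
    (R : Fin (N + 1) → Matrix (Fin q) (Fin q) ℝ)
    (y : Fin (N + 1) → Fin q → ℝ)
    (hQ : ∀ j, (Q j).PosDef) (hR : ∀ k, (R k).PosDef)
    (hG : (GSet F C H B Q R y).Nonempty)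
    (l : Fin (N + 2) → Fin n → ℝ)
    (xh : Fin (N + 2) → Fin n → ℝ) (z : Fin (N + 2) → Fin m → ℝ)
    (hbvp : BVP F C H B Q R y xh z)
    (pv : Fin (N + 2) → Fin n → ℝ) (d : Fin (N + 2) → Fin m → ℝ)
    (hbvp2 : BVP2 F C H B Q R l pv d) :
    IsMinimaxEstimate (GSet F C H B Q R y) (lfun l) (∑ k : Fin (N + 2), l k ⬝ᵥ xh k) ∧
    (⨆ x ∈ GSet F C H B Q R y,
        (↑|lfun l x - ∑ k : Fin (N + 2), l k ⬝ᵥ xh k| : EReal)) =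
      ((Real.sqrt (1 - ∑ k : Fin (N + 1), y k ⬝ᵥ (R k *ᵥ (y k - H k *ᵥ xh k.castSucc))) *
        Real.sqrt (∑ k : Fin (N + 2), l k ⬝ᵥ pv k) : ℝ) : EReal) := by
  have hQu (j : Fin (N + 2)) : IsUnit (Q j).det := (isUnit_iff_isUnit_det _).mp (hQ j).isUnit
  have hβ := jBilin_self_nonneg (H := H) (fun j => (hQ j).posSemidef) fun k => (hR k).posSemidef
  have hsymm := jBilin_isSymm (H := H) (fun j => (hQ j).isHermitian) fun k => (hR k).isHermitian
  set J := fun v : (Fin (N + 2) → Fin n → ℝ) × (Fin (N + 2) → Fin p → ℝ) => Jfun H Q R y v.2 v.1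
  set ℓ := fun v : (Fin (N + 2) → Fin n → ℝ) × (Fin (N + 2) → Fin p → ℝ) => lfun l v.1
  set v₀ := (xh, disturbance B Q z)
  have hJ (w) (hw : w ∈ nSubmodule F C B) : J (v₀ + w) = J v₀ + jBilin H Q R w w :=
    hbvp.Jfun_add hQ (fun k => (hR k).isHermitian) hw
  have hℓ (w) (hw : w ∈ nSubmodule F C B) :
      ℓ (v₀ + w) = ℓ v₀ + jBilin H Q R (pv, disturbance B Q d) w := by
    simp only [ℓ, Prod.fst_add, lfun_add, hbvp2.lfun_eq hQu hw]
  have hJv₀ : J v₀ ≤ 1 := by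
    obtain ⟨_, v, ⟨hv, hJv⟩, -⟩ := GSet_eq_image_fst y ▸ hG
    exact (isMinOn_iff.1 (isMinOn_of_forall_add_eq_add hβ hbvp.mem_NSet hJ) v hv).trans hJv
  rw [GSet_eq_image_fst]
  refine ⟨isMinimaxEstimate_of_forall_exists_add_eq ⟨v₀, ⟨hbvp.mem_NSet, hJv₀⟩, rfl⟩ ?_, ?_⟩
  · rintro _ ⟨v, hv, rfl⟩
    obtain ⟨v', hv', hsum⟩ := exists_reflection_mem hbvp.mem_NSet hJ hℓ hv
    exact ⟨v'.1, ⟨v', hv', rfl⟩, hsum⟩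
  · calc _ = ⨆ v ∈ {v | v ∈ nSubmodule F C B ∧ J v ≤ 1}, (↑|ℓ v - ℓ v₀| : EReal) :=
          iSup_image (f := Prod.fst) (g := fun x => (↑|lfun l x - lfun l xh| : EReal))
      _ = _ := iSup_abs_sub_eq_sqrt_mul_sqrt hβ hsymm hbvp.mem_NSet hbvp2.mem_NSet hJ hℓ hJv₀
      _ = _ := by rw [← hbvp2.lfun_eq hQu hbvp2.mem_NSet, ← hbvp.Jfun_eq hQu]; rfl

/-- under the hypotheses of Theorem 1, the minimax a-posteriori
error of the estimation `ℓ̂ = Σ (ℓ_k, x̂_k)` equals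
`σ̂ = (1 - Σ (y_k, R_k(y_k - H_k x̂_k)))^½ · (Σ (ℓ_k, p_k))^½`. -/
theorem stmt1 {N m n p q : ℕ}
    (F : Fin (N + 2) → Matrix (Fin m) (Fin n) ℝ)
    (C : Fin (N + 1) → Matrix (Fin m) (Fin n) ℝ)
    (H : Fin (N + 1) → Matrix (Fin q) (Fin n) ℝ)
    (B : Fin (N + 2) → Matrix (Fin m) (Fin p) ℝ)
    (Q : Fin (N + 2) → Matrix (Fin p) (Fin p) ℝ)
    (R : Fin (N + 1) → Matrix (Fin q) (Fin q) ℝ)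
    (y : Fin (N + 1) → Fin q → ℝ)
    (hQ : ∀ j, (Q j).PosDef) (hR : ∀ k, (R k).PosDef)
    (hG : (GSet F C H B Q R y).Nonempty)
    (l : Fin (N + 2) → Fin n → ℝ) (hl : memL F C H l)
    (xh : Fin (N + 2) → Fin n → ℝ) (z : Fin (N + 2) → Fin m → ℝ)
    (hbvp : BVP F C H B Q R y xh z)
    (pv : Fin (N + 2) → Fin n → ℝ) (d : Fin (N + 2) → Fin m → ℝ)
    (hbvp2 : BVP2 F C H B Q R l pv d) :
    IsMinimaxEstimate (GSet F C H B Q R y) (lfun l) (∑ k : Fin (N + 2), l k ⬝ᵥ xh k) ∧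
    (⨆ x ∈ GSet F C H B Q R y,
        (↑|lfun l x - ∑ k : Fin (N + 2), l k ⬝ᵥ xh k| : EReal)) =
      ((Real.sqrt (1 - ∑ k : Fin (N + 1), y k ⬝ᵥ (R k *ᵥ (y k - H k *ᵥ xh k.castSucc))) *
        Real.sqrt (∑ k : Fin (N + 2), l k ⬝ᵥ pv k) : ℝ) : EReal) :=
  stmt1_general F C H B Q R y hQ hR hG l xh z hbvp pv d hbvp2
end

section
/- Suppose the a-posteriori set G_y is nonempty, the family {ℓ_k}_{k=0}^{N+1} belongs to L, and ({x̂_k},{f̂_k}) ∈ 𝒩 is a minimizer of J_y over 𝒩, i.e. J_y({f̂_k},{x̂_k}) = inf_{({x_k},{f_k})∈𝒩} J_y({f_k},{x_k}). Then ℓ̂ = Σ_{k=0}^{N+1} (ℓ_k, x̂_k) is a minimax a-posteriori estimation of ℓ. -/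
open Matrix

lemma quad_lin {b c : ℝ} (h : ∀ t : ℝ, 0 ≤ t * b + t ^ 2 * c) : b = 0 := by
  rcases le_or_gt c 0 with hc | hc
  · have h1 := h 1; have h2 := h (-1); nlinarith
  · have h3 := h (-(b / (2 * c)))
    have hc' : c ≠ 0 := ne_of_gt hc
    have e : -(b / (2 * c)) * b + (-(b / (2 * c))) ^ 2 * c = -(b ^ 2 / (4 * c)) := by
      field_simp; ring
    rw [e] at h3
    have h5 : b ^ 2 / (4 * c) ≤ 0 := by linarith
    have h6 : b ^ 2 = b ^ 2 / (4 * c) * (4 * c) := by field_simp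
    have h7 : b ^ 2 / (4 * c) * (4 * c) ≤ 0 :=
      mul_nonpos_of_nonpos_of_nonneg h5 (by linarith)
    have hb2 : b ^ 2 = 0 := le_antisymm (by linarith) (sq_nonneg b)
    exact pow_eq_zero_iff (by norm_num) |>.mp hb2

lemma term_expand {a : ℕ} (M : Matrix (Fin a) (Fin a) ℝ) (u w : Fin a → ℝ) (t : ℝ) :
    (M *ᵥ (u + t • w)) ⬝ᵥ (u + t • w) =
      (M *ᵥ u) ⬝ᵥ u + t * ((M *ᵥ u) ⬝ᵥ w + (M *ᵥ w) ⬝ᵥ u) + t ^ 2 * ((M *ᵥ w) ⬝ᵥ w) := by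
  simp [Matrix.mulVec_add, Matrix.mulVec_smul, dotProduct_add, add_dotProduct,
    dotProduct_smul, smul_dotProduct, smul_eq_mul]
  ring
/-- Corollary 1: if `G_y ≠ ∅`, `{ℓ_k} ∈ L` and
`({x̂_k},{f̂_k}) ∈ 𝒩` minimizes `J_y` over `𝒩`, then
`ℓ̂ = Σ (ℓ_k, x̂_k)` is a minimax a-posteriori estimation of `ℓ`. -/
theorem stmt5 {N m n p q : ℕ}
    (F : Fin (N + 2) → Matrix (Fin m) (Fin n) ℝ)
    (C : Fin (N + 1) → Matrix (Fin m) (Fin n) ℝ)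
    (H : Fin (N + 1) → Matrix (Fin q) (Fin n) ℝ)
    (B : Fin (N + 2) → Matrix (Fin m) (Fin p) ℝ)
    (Q : Fin (N + 2) → Matrix (Fin p) (Fin p) ℝ)
    (R : Fin (N + 1) → Matrix (Fin q) (Fin q) ℝ)
    (y : Fin (N + 1) → Fin q → ℝ)
    (hQ : ∀ j, (Q j).PosDef) (hR : ∀ k, (R k).PosDef)
    (hG : (GSet F C H B Q R y).Nonempty)
    (l : Fin (N + 2) → Fin n → ℝ) (hl : memL F C H l)
    (xh : Fin (N + 2) → Fin n → ℝ) (fh : Fin (N + 2) → Fin p → ℝ)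
    (hmem : (xh, fh) ∈ NSet F C B)
    (hmin : ∀ xf ∈ NSet F C B, Jfun H Q R y fh xh ≤ Jfun H Q R y xf.2 xf.1) :
    IsMinimaxEstimate (GSet F C H B Q R y) (lfun l) (∑ k : Fin (N + 2), l k ⬝ᵥ xh k) := by
  classical
  -- `xh` itself lies in `G`.
  have hxhG : xh ∈ GSet F C H B Q R y := by
    obtain ⟨x₀, f₀, hm₀, hJ₀⟩ := hG
    exact ⟨fh, hmem, (hmin (x₀, f₀) hm₀).trans hJ₀⟩
  -- symmetry of G about xh
  have symm : ∀ x ∈ GSet F C H B Q R y, ∃ x' ∈ GSet F C H B Q R y,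
      lfun l x + lfun l x' = 2 * lfun l xh := by
    rintro x ⟨f, ⟨hc, h0⟩, hJle⟩
    -- the whole line through (xh,fh) and (x,f) stays in 𝒩
    have hNt : ∀ t : ℝ,
        ((fun k => xh k + t • (x k - xh k)), (fun j => fh j + t • (f j - fh j))) ∈
          NSet F C B := by
      intro t
      constructor
      · intro k
        have h1 := hmem.1 k
        have h2 := hc k
        funext i
        have hi1 := congrFun h1 i
        have hi2 := congrFun h2 i
        simp only [Matrix.mulVec_add, Matrix.mulVec_smul, Matrix.mulVec_sub,
          Pi.add_apply, Pi.smul_apply, Pi.sub_apply, smul_eq_mul] at hi1 hi2 ⊢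
        linear_combination (1 - t) * hi1 + t * hi2
      · have h1 := hmem.2
        funext i
        have hi1 := congrFun h1 i
        have hi2 := congrFun h0 i
        simp only [Matrix.mulVec_add, Matrix.mulVec_smul, Matrix.mulVec_sub,
          Pi.add_apply, Pi.smul_apply, Pi.sub_apply, smul_eq_mul] at hi1 hi2 ⊢
        linear_combination (1 - t) * hi1 + t * hi2
    -- J along that line is a quadratic polynomial in t
    obtain ⟨bb, cc, hquad⟩ :
        ∃ bb cc : ℝ, ∀ t : ℝ,
          Jfun H Q R y (fun j => fh j + t • (f j - fh j))
              (fun k => xh k + t • (x k - xh k)) =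
            Jfun H Q R y fh xh + t * bb + t ^ 2 * cc := by
      refine ⟨(∑ j : Fin (N + 2),
            ((Q j *ᵥ fh j) ⬝ᵥ (f j - fh j) + (Q j *ᵥ (f j - fh j)) ⬝ᵥ fh j)) +
          ∑ k : Fin (N + 1),
            ((R k *ᵥ (y k - H k *ᵥ xh k.castSucc)) ⬝ᵥ
                (-(H k *ᵥ (x k.castSucc - xh k.castSucc))) +
              (R k *ᵥ (-(H k *ᵥ (x k.castSucc - xh k.castSucc)))) ⬝ᵥ
                (y k - H k *ᵥ xh k.castSucc)),
        (∑ j : Fin (N + 2), (Q j *ᵥ (f j - fh j)) ⬝ᵥ (f j - fh j)) +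
          ∑ k : Fin (N + 1),
            (R k *ᵥ (-(H k *ᵥ (x k.castSucc - xh k.castSucc)))) ⬝ᵥ
              (-(H k *ᵥ (x k.castSucc - xh k.castSucc))),
        fun t => ?_⟩
      have eq2 : ∀ k : Fin (N + 1),
          y k - H k *ᵥ (xh k.castSucc + t • (x k.castSucc - xh k.castSucc)) =
            (y k - H k *ᵥ xh k.castSucc) +
              t • (-(H k *ᵥ (x k.castSucc - xh k.castSucc))) := by
        intro k
        rw [Matrix.mulVec_add, Matrix.mulVec_smul]
        module
      have hQsum : (∑ j : Fin (N + 2),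
            (Q j *ᵥ (fh j + t • (f j - fh j))) ⬝ᵥ (fh j + t • (f j - fh j))) =
          ∑ j : Fin (N + 2),
            ((Q j *ᵥ fh j) ⬝ᵥ fh j +
              t * ((Q j *ᵥ fh j) ⬝ᵥ (f j - fh j) + (Q j *ᵥ (f j - fh j)) ⬝ᵥ fh j) +
              t ^ 2 * ((Q j *ᵥ (f j - fh j)) ⬝ᵥ (f j - fh j))) :=
        Finset.sum_congr rfl fun j _ => term_expand (Q j) (fh j) (f j - fh j) t
      have hRsum : (∑ k : Fin (N + 1),
            (R k *ᵥ (y k - H k *ᵥ (xh k.castSucc + t • (x k.castSucc - xh k.castSucc)))) ⬝ᵥ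
              (y k - H k *ᵥ (xh k.castSucc + t • (x k.castSucc - xh k.castSucc)))) =
          ∑ k : Fin (N + 1),
            ((R k *ᵥ (y k - H k *ᵥ xh k.castSucc)) ⬝ᵥ (y k - H k *ᵥ xh k.castSucc) +
              t * ((R k *ᵥ (y k - H k *ᵥ xh k.castSucc)) ⬝ᵥ
                  (-(H k *ᵥ (x k.castSucc - xh k.castSucc))) +
                (R k *ᵥ (-(H k *ᵥ (x k.castSucc - xh k.castSucc)))) ⬝ᵥ
                  (y k - H k *ᵥ xh k.castSucc)) +
              t ^ 2 * ((R k *ᵥ (-(H k *ᵥ (x k.castSucc - xh k.castSucc)))) ⬝ᵥ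
                (-(H k *ᵥ (x k.castSucc - xh k.castSucc))))) :=
        Finset.sum_congr rfl fun k _ => by
          rw [eq2 k]
          exact term_expand (R k) (y k - H k *ᵥ xh k.castSucc)
            (-(H k *ᵥ (x k.castSucc - xh k.castSucc))) t
      unfold Jfun
      beta_reduce
      rw [hQsum, hRsum, Finset.sum_add_distrib, Finset.sum_add_distrib,
        Finset.sum_add_distrib, Finset.sum_add_distrib, ← Finset.mul_sum,
        ← Finset.mul_sum, ← Finset.mul_sum, ← Finset.mul_sum]
      ring
    -- the linear coefficient vanishes at the minimizer
    have hb0 : bb = 0 := by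
      apply quad_lin
      intro t
      have := hmin _ (hNt t)
      rw [hquad t] at this
      linarith
    -- identify the point at t = 1 with (x, f)
    have hx1 : (fun k => xh k + (1 : ℝ) • (x k - xh k)) = x := by
      funext k; simp
    have hf1 : (fun j => fh j + (1 : ℝ) • (f j - fh j)) = f := by
      funext j; simp
    have hJ1 := hquad 1
    rw [hx1, hf1] at hJ1
    have hJm1 := hquad (-1)
    -- the reflected point lies in G
    refine ⟨fun k => xh k + (-1 : ℝ) • (x k - xh k),
      ⟨fun j => fh j + (-1 : ℝ) • (f j - fh j), hNt (-1), ?_⟩, ?_⟩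
    · rw [hJm1, hb0]
      rw [hb0] at hJ1
      have : Jfun H Q R y fh xh + (-1) * 0 + (-1) ^ 2 * cc = Jfun H Q R y f x := by
        rw [hJ1]; ring
      rw [this]; exact hJle
    · unfold lfun
      rw [← Finset.sum_add_distrib, Finset.mul_sum]
      refine Finset.sum_congr rfl fun k _ => ?_
      simp only [dotProduct_add, dotProduct_smul, dotProduct_sub, smul_eq_mul]
      ring
  -- now the minimax argument
  have hlhat : (∑ k : Fin (N + 2), l k ⬝ᵥ xh k) = lfun l xh := rfl
  unfold IsMinimaxEstimate
  apply le_antisymm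
  · refine le_iInf₂ fun xt hxt => iSup₂_le fun x hx => ?_
    obtain ⟨x', hx', hsum⟩ := symm x hx
    have h2 : 2 * |lfun l x - ∑ k : Fin (N + 2), l k ⬝ᵥ xh k| ≤
        |lfun l x - lfun l xt| + |lfun l x' - lfun l xt| := by
      have hrw : 2 * (lfun l x - ∑ k : Fin (N + 2), l k ⬝ᵥ xh k) =
          (lfun l x - lfun l xt) - (lfun l x' - lfun l xt) := by
        rw [hlhat]; linarith
      calc 2 * |lfun l x - ∑ k : Fin (N + 2), l k ⬝ᵥ xh k|
          = |(lfun l x - lfun l xt) - (lfun l x' - lfun l xt)| := by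
            rw [← hrw, abs_mul]; simp
        _ ≤ |lfun l x - lfun l xt| + |lfun l x' - lfun l xt| := abs_sub _ _
    rcases le_total (|lfun l x - lfun l xt|) (|lfun l x' - lfun l xt|) with hcmp | hcmp
    · refine le_iSup₂_of_le x' hx' ?_
      exact EReal.coe_le_coe_iff.mpr (by linarith)
    · refine le_iSup₂_of_le x hx ?_
      exact EReal.coe_le_coe_iff.mpr (by linarith)
  · exact iInf₂_le xh hxhG
end

section
/- Let ({x̂_k},{f̂_k}) ∈ 𝒩 be a minimizer of J_y over 𝒩 with minimal value Ĵ = J_y({f̂_k},{x̂_k}) ≤ 1. Then {({x_k},{f_k}) ∈ 𝒩 : J_y({f_k},{x_k}) ≤ 1} = {({x̂_k + x_k},{f̂_k + f_k}) : ({x_k},{f_k}) ∈ 𝒩, J_0({f_k},{x_k}) ≤ 1 − Ĵ}. -/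
open Matrix

/-! The constraint set `𝒩` is a linear subspace, and `J_y(f, x)` is the quadratic form
`P(g, v) = Σ (Q_j g_j, g_j) + Σ (R_k v_k, v_k)` evaluated at `(f, y - H x)`, an affine function of
`(x, f)` whose linear part turns `P` into `J_0`. Hence for `w ∈ 𝒩` we have
`J_y(ŵ + t w) = Ĵ + t c(w) + t² J_0(w)` with `c(w)` a polar value of `P`; minimality at `t = 0`
forces `c(w) = 0`, so `J_y(ŵ + w) = Ĵ + J_0(w)` on `𝒩`, and both inclusions follow. -/

section QuadraticMinimum

variable {𝕜 G : Type*} [Field 𝕜] [LinearOrder 𝕜] [IsStrictOrderedRing 𝕜]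
  [AddCommGroup G] [Module 𝕜 G]

theorem eq_zero_of_forall_nonneg_mul_add {a b : 𝕜} (h : ∀ t : 𝕜, 0 ≤ a * (t * t) + b * t) :
    b = 0 := by
  have hdisc := discrim_le_zero (a := a) (b := b) (c := 0) (by simpa using h)
  rw [discrim, mul_zero, sub_zero] at hdisc
  exact pow_eq_zero_iff two_ne_zero |>.mp (le_antisymm hdisc (sq_nonneg b))

theorem QuadraticMap.polar_eq_zero_of_forall_le_map_add {P : QuadraticMap 𝕜 G 𝕜}
    {V : Submodule 𝕜 G} {u : G} (hmin : ∀ v ∈ V, P u ≤ P (u + v)) {v : G} (hv : v ∈ V) :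
    polar P u v = 0 := by
  refine eq_zero_of_forall_nonneg_mul_add (a := P v) fun t => ?_
  have := hmin (t • v) (V.smul_mem t hv)
  rw [QuadraticMap.map_add P, QuadraticMap.map_smul, polar_smul_right, smul_eq_mul,
    smul_eq_mul] at this
  linarith

theorem QuadraticMap.map_add_eq_of_forall_le_map_add {P : QuadraticMap 𝕜 G 𝕜}
    {V : Submodule 𝕜 G} {u : G} (hmin : ∀ v ∈ V, P u ≤ P (u + v)) {v : G} (hv : v ∈ V) :
    P (u + v) = P u + P v := by
  rw [QuadraticMap.map_add P, polar_eq_zero_of_forall_le_map_add hmin hv, add_zero]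

end QuadraticMinimum

section Estimation

variable {N m n p q : ℕ} (F : Fin (N + 2) → Matrix (Fin m) (Fin n) ℝ)
  (C : Fin (N + 1) → Matrix (Fin m) (Fin n) ℝ) (H : Fin (N + 1) → Matrix (Fin q) (Fin n) ℝ)
  (B : Fin (N + 2) → Matrix (Fin m) (Fin p) ℝ) (Q : Fin (N + 2) → Matrix (Fin p) (Fin p) ℝ)
  (R : Fin (N + 1) → Matrix (Fin q) (Fin q) ℝ) (y : Fin (N + 1) → Fin q → ℝ)

def NSubmodule : Submodule ℝ ((Fin (N + 2) → Fin n → ℝ) × (Fin (N + 2) → Fin p → ℝ)) where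
  carrier := NSet F C B
  add_mem' {a b} ha hb := by
    refine ⟨fun k => ?_, ?_⟩
    · simp only [Prod.fst_add, Prod.snd_add, Pi.add_apply, mulVec_add]
      rw [add_sub_add_comm, ha.1 k, hb.1 k]
    · simp only [Prod.fst_add, Prod.snd_add, Pi.add_apply, mulVec_add, ha.2, hb.2]
  zero_mem' := ⟨fun k => by simp, by simp⟩
  smul_mem' t a ha := by
    refine ⟨fun k => ?_, ?_⟩
    · simp only [Prod.smul_fst, Prod.smul_snd, Pi.smul_apply, mulVec_smul]
      rw [← smul_sub, ha.1 k]
    · simp only [Prod.smul_fst, Prod.smul_snd, Pi.smul_apply, mulVec_smul, ha.2]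

def costForm : QuadraticMap ℝ ((Fin (N + 2) → Fin p → ℝ) × (Fin (N + 1) → Fin q → ℝ)) ℝ :=
  (QuadraticMap.pi fun j => (Q j).toQuadraticForm').prod
    (QuadraticMap.pi fun k => (R k).toQuadraticForm')

def costArg (xf : (Fin (N + 2) → Fin n → ℝ) × (Fin (N + 2) → Fin p → ℝ)) :
    (Fin (N + 2) → Fin p → ℝ) × (Fin (N + 1) → Fin q → ℝ) :=
  (xf.2, fun k => y k - H k *ᵥ xf.1 k.castSucc)

theorem Jfun_eq_costForm (xf : (Fin (N + 2) → Fin n → ℝ) × (Fin (N + 2) → Fin p → ℝ)) :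
    Jfun H Q R y xf.2 xf.1 = costForm Q R (costArg H y xf) := by
  simp only [Jfun, costForm, costArg, QuadraticMap.prod_apply, QuadraticMap.pi_apply,
    Matrix.toQuadraticForm', LinearMap.BilinMap.toQuadraticMap_apply, Matrix.toLinearMap₂'_apply',
    dotProduct_comm]

def costArgLinear :
    ((Fin (N + 2) → Fin n → ℝ) × (Fin (N + 2) → Fin p → ℝ)) →ₗ[ℝ]
      (Fin (N + 2) → Fin p → ℝ) × (Fin (N + 1) → Fin q → ℝ) where
  toFun := costArg H fun _ => 0
  map_add' a b := by ext <;> simp [costArg, mulVec_add, add_comm]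
  map_smul' t a := by ext <;> simp [costArg, mulVec_smul]

theorem costArg_add (a b : (Fin (N + 2) → Fin n → ℝ) × (Fin (N + 2) → Fin p → ℝ)) :
    costArg H y (a + b) = costArg H y a + costArgLinear H b := by
  ext k i
  · rfl
  · simp [costArgLinear, costArg, mulVec_add]
    ring

variable {F C H B Q R y}

theorem Jfun_add_eq_add_of_forall_le {xh : Fin (N + 2) → Fin n → ℝ}
    {fh : Fin (N + 2) → Fin p → ℝ} (hmem : (xh, fh) ∈ NSet F C B)
    (hmin : ∀ xf ∈ NSet F C B, Jfun H Q R y fh xh ≤ Jfun H Q R y xf.2 xf.1)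
    {w : (Fin (N + 2) → Fin n → ℝ) × (Fin (N + 2) → Fin p → ℝ)} (hw : w ∈ NSet F C B) :
    Jfun H Q R y (fh + w.2) (xh + w.1) = Jfun H Q R y fh xh + Jfun H Q R (fun _ => 0) w.2 w.1 := by
  have hmin' : ∀ v ∈ (NSubmodule F C B).map (costArgLinear H),
      costForm Q R (costArg H y (xh, fh)) ≤ costForm Q R (costArg H y (xh, fh) + v) := by
    rintro _ ⟨w', hw', rfl⟩
    rw [← costArg_add, ← Jfun_eq_costForm, ← Jfun_eq_costForm]
    exact hmin _ ((NSubmodule F C B).add_mem hmem hw')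
  have h := QuadraticMap.map_add_eq_of_forall_le_map_add hmin' (Submodule.mem_map_of_mem hw)
  rw [← costArg_add, ← Jfun_eq_costForm, ← Jfun_eq_costForm] at h
  rw [Jfun_eq_costForm H Q R fun _ => 0]
  exact h

end Estimation

theorem stmt9_general {N m n p q : ℕ}
    (F : Fin (N + 2) → Matrix (Fin m) (Fin n) ℝ)
    (C : Fin (N + 1) → Matrix (Fin m) (Fin n) ℝ)
    (H : Fin (N + 1) → Matrix (Fin q) (Fin n) ℝ)
    (B : Fin (N + 2) → Matrix (Fin m) (Fin p) ℝ)
    (Q : Fin (N + 2) → Matrix (Fin p) (Fin p) ℝ)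
    (R : Fin (N + 1) → Matrix (Fin q) (Fin q) ℝ)
    (y : Fin (N + 1) → Fin q → ℝ)
    (xh : Fin (N + 2) → Fin n → ℝ) (fh : Fin (N + 2) → Fin p → ℝ)
    (hmem : (xh, fh) ∈ NSet F C B)
    (hmin : ∀ xf ∈ NSet F C B, Jfun H Q R y fh xh ≤ Jfun H Q R y xf.2 xf.1) :
    {xf | xf ∈ NSet F C B ∧ Jfun H Q R y xf.2 xf.1 ≤ 1} =
      (fun xf => (xh + xf.1, fh + xf.2)) ''
        {xf | xf ∈ NSet F C B ∧
          Jfun H Q R (fun _ => 0) xf.2 xf.1 ≤ 1 - Jfun H Q R y fh xh} := by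
  ext xf
  constructor
  · rintro ⟨hxf, hJ⟩
    have hsub : xf - (xh, fh) ∈ NSet F C B := (NSubmodule F C B).sub_mem hxf hmem
    have hJ' := Jfun_add_eq_add_of_forall_le hmem hmin hsub
    simp only [Prod.fst_sub, Prod.snd_sub, add_sub_cancel] at hJ'
    exact ⟨xf - (xh, fh), ⟨hsub, by simp only [Prod.fst_sub, Prod.snd_sub]; linarith⟩, by simp⟩
  · rintro ⟨w, ⟨hw, hJ⟩, rfl⟩
    refine ⟨(NSubmodule F C B).add_mem hmem hw, ?_⟩
    rw [Jfun_add_eq_add_of_forall_le hmem hmin hw]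
    linarith

/-- if `({x̂_k},{f̂_k}) ∈ 𝒩` minimizes `J_y` over `𝒩` with
`Ĵ = J_y({f̂_k},{x̂_k}) ≤ 1`, then
`{({x},{f}) ∈ 𝒩 : J_y ≤ 1} = ({x̂},{f̂}) + {({x},{f}) ∈ 𝒩 : J_0 ≤ 1 - Ĵ}`. -/
theorem stmt9 {N m n p q : ℕ}
    (F : Fin (N + 2) → Matrix (Fin m) (Fin n) ℝ)
    (C : Fin (N + 1) → Matrix (Fin m) (Fin n) ℝ)
    (H : Fin (N + 1) → Matrix (Fin q) (Fin n) ℝ)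
    (B : Fin (N + 2) → Matrix (Fin m) (Fin p) ℝ)
    (Q : Fin (N + 2) → Matrix (Fin p) (Fin p) ℝ)
    (R : Fin (N + 1) → Matrix (Fin q) (Fin q) ℝ)
    (y : Fin (N + 1) → Fin q → ℝ)
    (hQ : ∀ j, (Q j).PosDef) (hR : ∀ k, (R k).PosDef)
    (xh : Fin (N + 2) → Fin n → ℝ) (fh : Fin (N + 2) → Fin p → ℝ)
    (hmem : (xh, fh) ∈ NSet F C B)
    (hmin : ∀ xf ∈ NSet F C B, Jfun H Q R y fh xh ≤ Jfun H Q R y xf.2 xf.1)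
    (hJle : Jfun H Q R y fh xh ≤ 1) :
    {xf | xf ∈ NSet F C B ∧ Jfun H Q R y xf.2 xf.1 ≤ 1} =
      (fun xf => (xh + xf.1, fh + xf.2)) ''
        {xf | xf ∈ NSet F C B ∧
          Jfun H Q R (fun _ => 0) xf.2 xf.1 ≤ 1 - Jfun H Q R y fh xh} :=
  stmt9_general F C H B Q R y xh fh hmem hmin
end
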